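/- For every maximal clique C of routes of G(H) with respect to the canonical bipartite framing and every i ∈ S, there is exactly one j₀ ∈ N(i) such that C contains both a route of the form (1,(i,j₀),c) and a route of the form (2,(i,j₀),c') for some c, c' ∈ {1,2}. Dually, for every j ∈ T there is exactly one i₀ ∈ N(j) such that C contains both a route of the form (a,(i₀,j),1) and a route of the form (a',(i₀,j),2) for some a, a' ∈ {1,2}. -/

import Mathlib

open Finset Filter Pointwise

/-- Neighbors in the right shore `T` of a left vertex `i`. -/
def Nbr (E : Finset (ℕ × ℕ)) (i : ℕ) : Finset ℕ :=
  (E.filter (fun p => p.1 = i)).image Prod.snd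

/-- Neighbors in the left shore `S` of a right vertex `j`. -/
def Nbr' (E : Finset (ℕ × ℕ)) (j : ℕ) : Finset ℕ :=
  (E.filter (fun p => p.2 = j)).image Prod.fst

/-- A route of `G(H)`: a triple `(a, (i,j), c)` with `a, c ∈ {1,2}`, `(i,j) ∈ E`,
representing the path `α_{a,i} β_{i,j} γ_{j,c}`. -/
abbrev Route : Type := ℕ × (ℕ × ℕ) × ℕ

def IsRoute (E : Finset (ℕ × ℕ)) (r : Route) : Prop :=
  (r.1 = 1 ∨ r.1 = 2) ∧ r.2.1 ∈ E ∧ (r.2.2 = 1 ∨ r.2.2 = 2)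

/-- Two routes are in conflict with respect to the canonical bipartite framing. -/
def Conflict (r r' : Route) : Prop :=
  (r.2.1 = r'.2.1 ∧
    ((r.1 = 1 ∧ r.2.2 = 2 ∧ r'.1 = 2 ∧ r'.2.2 = 1) ∨
     (r.1 = 2 ∧ r.2.2 = 1 ∧ r'.1 = 1 ∧ r'.2.2 = 2))) ∨
  (r.2.1.1 = r'.2.1.1 ∧ r.2.1.2 ≠ r'.2.1.2 ∧
    ((r.2.1.2 < r'.2.1.2 ∧ r'.1 = 1 ∧ r.1 = 2) ∨
     (r'.2.1.2 < r.2.1.2 ∧ r.1 = 1 ∧ r'.1 = 2))) ∨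
  (r.2.1.2 = r'.2.1.2 ∧ r.2.1.1 ≠ r'.2.1.1 ∧
    ((r.2.1.1 < r'.2.1.1 ∧ r.2.2 = 2 ∧ r'.2.2 = 1) ∨
     (r'.2.1.1 < r.2.1.1 ∧ r'.2.2 = 2 ∧ r.2.2 = 1)))

/-- A clique: a set of pairwise coherent routes. -/
def IsClique (E : Finset (ℕ × ℕ)) (C : Set Route) : Prop :=
  (∀ r ∈ C, IsRoute E r) ∧ ∀ r ∈ C, ∀ r' ∈ C, r ≠ r' → ¬ Conflict r r'

/-- A maximal clique of routes. -/
def IsMaxClique (E : Finset (ℕ × ℕ)) (C : Set Route) : Prop :=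
  IsClique E C ∧ ∀ C' : Set Route, IsClique E C' → C ⊆ C' → C' = C

/-!
Maximality of `C` means that every route outside `C` conflicts with a route of `C`. Conflicts
between routes through the same `i ∈ S` but different edges only concern source edges, and
those through the same `j ∈ T` only sink edges. Hence if the source edge `a` at `(i, j)` is
compatible with all routes of `C` through `i` on other edges, one of the two sink
edges completes it to a route of `C`: routes of `C` blocking both sink edges would conflict with
each other. This gives a route with source edge `1` on the least neighbour of `i`, and then one
with source edge `2` on the largest neighbour carrying source edge `1`. Two such doubled edges
`j < j'` are impossible, as `(2, (i, j), _)` conflicts with `(1, (i, j'), _)`. The statement for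
the shore `T` follows by reversing all routes.
-/

lemma conflict_iff (a i j c a' i' j' c' : ℕ) :
    Conflict (a, (i, j), c) (a', (i', j'), c') ↔
    ((i = i' ∧ j = j') ∧
      ((a = 1 ∧ c = 2 ∧ a' = 2 ∧ c' = 1) ∨
       (a = 2 ∧ c = 1 ∧ a' = 1 ∧ c' = 2))) ∨
    (i = i' ∧ j ≠ j' ∧
      ((j < j' ∧ a' = 1 ∧ a = 2) ∨ (j' < j ∧ a = 1 ∧ a' = 2))) ∨
    (j = j' ∧ i ≠ i' ∧
      ((i < i' ∧ c = 2 ∧ c' = 1) ∨ (i' < i ∧ c' = 2 ∧ c = 1))) := by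
  simp only [Conflict, Prod.ext_iff]

lemma Conflict.symm {r r' : Route} (h : Conflict r r') : Conflict r' r := by
  obtain ⟨a, ⟨i, j⟩, c⟩ := r
  obtain ⟨a', ⟨i', j'⟩, c'⟩ := r'
  rw [conflict_iff] at h ⊢
  rcases h with ⟨⟨hi, hj⟩, h⟩ | ⟨hi, hj, h⟩ | ⟨hj, hi, h⟩
  · exact Or.inl ⟨⟨hi.symm, hj.symm⟩, by omega⟩
  · exact Or.inr (Or.inl ⟨hi.symm, Ne.symm hj, by omega⟩)
  · exact Or.inr (Or.inr ⟨hj.symm, Ne.symm hi, by omega⟩)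

lemma not_conflict_self (r : Route) : ¬ Conflict r r := by
  obtain ⟨a, ⟨i, j⟩, c⟩ := r
  rw [conflict_iff]
  omega

lemma conflict_of_lt {i j j' c c' : ℕ} (h : j < j') :
    Conflict (2, (i, j), c) (1, (i, j'), c') := by
  rw [conflict_iff]
  omega

lemma mem_Nbr_iff {E : Finset (ℕ × ℕ)} {i j : ℕ} : j ∈ Nbr E i ↔ (i, j) ∈ E := by
  simp [Nbr]

lemma IsClique.not_conflict {E : Finset (ℕ × ℕ)} {C : Set Route} (hC : IsClique E C)
    {r r' : Route} (hr : r ∈ C) (hr' : r' ∈ C) : ¬ Conflict r r' := by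
  intro h
  exact hC.2 r hr r' hr' (by rintro rfl; exact not_conflict_self r h) h

lemma IsMaxClique.mem_of_forall_not_conflict {E : Finset (ℕ × ℕ)} {C : Set Route}
    (hC : IsMaxClique E C) {r : Route} (hr : IsRoute E r) (hcoh : ∀ r' ∈ C, ¬ Conflict r r') :
    r ∈ C := by
  have hclique : IsClique E (insert r C) := by
    refine ⟨Set.forall_mem_insert.mpr ⟨hr, hC.1.1⟩, ?_⟩
    rintro x (rfl | hx) y (rfl | hy) hxy
    · exact absurd rfl hxy
    · exact hcoh y hy
    · exact fun h => hcoh x hx h.symm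
    · exact hC.1.2 x hx y hy hxy
  exact hC.2 _ hclique (Set.subset_insert r C) ▸ Set.mem_insert r C

lemma IsMaxClique.exists_mem_of_row_coherent {E : Finset (ℕ × ℕ)} {C : Set Route}
    (hC : IsMaxClique E C) {a i j : ℕ} (ha : a = 1 ∨ a = 2) (hij : (i, j) ∈ E)
    (hrow : ∀ c a' j' c', (a', (i, j'), c') ∈ C → j' ≠ j →
      ¬ Conflict (a, (i, j), c) (a', (i, j'), c')) :
    ∃ c, (a, (i, j), c) ∈ C := by
  by_contra! hnot
  have blocker : ∀ c, c = 1 ∨ c = 2 → ∃ a' i' c', (a', (i', j), c') ∈ C ∧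
      Conflict (a, (i, j), c) (a', (i', j), c') := fun c hc => by
    by_contra! hcoh
    refine hnot c (hC.mem_of_forall_not_conflict ⟨ha, hij, hc⟩ ?_)
    rintro ⟨a', ⟨i', j'⟩, c'⟩ hr' h
    obtain rfl | hj' := eq_or_ne j' j
    · exact hcoh a' i' c' hr' h
    · have hi' : i' = i := by rw [conflict_iff] at h; omega
      subst hi'
      exact hrow c a' j' c' hr' hj' h
  obtain ⟨a₁, i₁, c₁, hr₁, h₁⟩ := blocker 1 (Or.inl rfl)
  obtain ⟨a₂, i₂, c₂, hr₂, h₂⟩ := blocker 2 (Or.inr rfl)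
  have k₁ : c₁ = 2 ∧ (i₁ < i ∨ i₁ = i ∧ a = 2) := by rw [conflict_iff] at h₁; omega
  have k₂ : c₂ = 1 ∧ (i < i₂ ∨ i₂ = i ∧ a = 1) := by rw [conflict_iff] at h₂; omega
  refine hC.1.not_conflict hr₁ hr₂ ((conflict_iff ..).mpr (Or.inr (Or.inr ?_)))
  omega

lemma IsMaxClique.mem_Nbr {E : Finset (ℕ × ℕ)} {C : Set Route} (hC : IsMaxClique E C)
    {a i j c : ℕ} (h : (a, (i, j), c) ∈ C) : j ∈ Nbr E i :=
  mem_Nbr_iff.mpr (hC.1.1 _ h).2.1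

theorem IsMaxClique.existsUnique_double_source {E : Finset (ℕ × ℕ)} {C : Set Route}
    (hC : IsMaxClique E C) {i : ℕ} (hi : (Nbr E i).Nonempty) :
    ∃! j₀ : ℕ, j₀ ∈ Nbr E i ∧
      (∃ c : ℕ, (1, (i, j₀), c) ∈ C) ∧ (∃ c' : ℕ, (2, (i, j₀), c') ∈ C) := by
  classical
  set J := (Nbr E i).filter (fun j => ∃ c, (1, (i, j), c) ∈ C)
  have hJ : J.Nonempty := by
    set j := (Nbr E i).min' hi
    have hj : j ∈ Nbr E i := (Nbr E i).min'_mem hi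
    obtain ⟨c, hc⟩ := hC.exists_mem_of_row_coherent (Or.inl rfl) (mem_Nbr_iff.mp hj)
      fun c a' j' c' hr' hj' h => by
        have := (Nbr E i).min'_le j' (hC.mem_Nbr hr')
        rw [conflict_iff] at h
        omega
    exact ⟨j, Finset.mem_filter.mpr ⟨hj, c, hc⟩⟩
  set j₁ := J.max' hJ
  obtain ⟨hj₁, hone⟩ := Finset.mem_filter.mp (J.max'_mem hJ)
  have htwo : ∃ c, (2, (i, j₁), c) ∈ C := by
    refine hC.exists_mem_of_row_coherent (Or.inr rfl) (mem_Nbr_iff.mp hj₁)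
      fun c a' j' c' hr' hj' h => ?_
    rw [conflict_iff] at h
    have : a' = 1 → j' ≤ j₁ := by
      rintro rfl
      exact J.le_max' j' (Finset.mem_filter.mpr ⟨hC.mem_Nbr hr', c', hr'⟩)
    omega
  refine ⟨j₁, ⟨hj₁, hone, htwo⟩, ?_⟩
  rintro j ⟨-, ⟨c₁, hc₁⟩, ⟨c₂, hc₂⟩⟩
  obtain ⟨d₁, hd₁⟩ := hone
  obtain ⟨d₂, hd₂⟩ := htwo
  rcases lt_trichotomy j j₁ with h | h | h
  · exact absurd (conflict_of_lt h) (hC.1.not_conflict hc₂ hd₁)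
  · exact h
  · exact absurd (conflict_of_lt h) (hC.1.not_conflict hd₂ hc₁)

def Route.reverse (r : Route) : Route := (r.2.2, (r.2.1.2, r.2.1.1), r.1)

lemma Route.reverse_involutive : Function.Involutive Route.reverse := fun _ => rfl

lemma Conflict.reverse {r r' : Route} (h : Conflict r r') : Conflict r.reverse r'.reverse := by
  obtain ⟨a, ⟨i, j⟩, c⟩ := r
  obtain ⟨a', ⟨i', j'⟩, c'⟩ := r'
  rw [conflict_iff] at h
  change Conflict (c, (j, i), a) (c', (j', i'), a')
  rw [conflict_iff]
  rcases h with ⟨⟨hi, hj⟩, h⟩ | ⟨hi, hj, h⟩ | ⟨hj, hi, h⟩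
  · exact Or.inl ⟨⟨hj, hi⟩, by omega⟩
  · exact Or.inr (Or.inr ⟨hi, hj, by omega⟩)
  · exact Or.inr (Or.inl ⟨hj, hi, by omega⟩)

lemma IsClique.preimage_reverse {E E' : Finset (ℕ × ℕ)} {C : Set Route}
    (hE : ∀ p ∈ E', p.swap ∈ E) (hC : IsClique E' C) :
    IsClique E (Route.reverse ⁻¹' C) := by
  refine ⟨fun r hr => ?_, fun r hr r' hr' hne h => ?_⟩
  · obtain ⟨hc, hij, ha⟩ := hC.1 _ hr
    exact ⟨ha, hE _ hij, hc⟩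
  · exact hC.2 _ hr _ hr' (Route.reverse_involutive.injective.ne hne) h.reverse

lemma IsMaxClique.preimage_reverse {E : Finset (ℕ × ℕ)} {C : Set Route} (hC : IsMaxClique E C) :
    IsMaxClique (E.image Prod.swap) (Route.reverse ⁻¹' C) := by
  refine ⟨hC.1.preimage_reverse (by simp), fun D hD hCD => ?_⟩
  have hDE : IsClique E (Route.reverse ⁻¹' D) := hD.preimage_reverse
    fun p hp => by
      obtain ⟨q, hq, rfl⟩ := Finset.mem_image.mp hp
      simpa using hq
  have hsub : C ⊆ Route.reverse ⁻¹' D := fun r hr =>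
    hCD (show r.reverse.reverse ∈ C from hr)
  rw [← hC.2 _ hDE hsub, ← Set.preimage_comp, Route.reverse_involutive.comp_self,
    Set.preimage_id]

lemma Nbr_image_swap (E : Finset (ℕ × ℕ)) (j : ℕ) : Nbr (E.image Prod.swap) j = Nbr' E j := by
  ext i
  simp [Nbr, Nbr']

theorem maxclique_unique_double_edge_general (n m : ℕ) (E : Finset (ℕ × ℕ))
    (hdegS : ∀ i ∈ Finset.Icc 1 n, 2 ≤ (Nbr E i).card)
    (hdegT : ∀ j ∈ Finset.Icc 1 m, 2 ≤ (Nbr' E j).card) :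
    ∀ C : Set Route, IsMaxClique E C →
      (∀ i ∈ Finset.Icc 1 n,
        ∃! j₀ : ℕ, j₀ ∈ Nbr E i ∧
          (∃ c : ℕ, (1, (i, j₀), c) ∈ C) ∧ (∃ c' : ℕ, (2, (i, j₀), c') ∈ C)) ∧
      (∀ j ∈ Finset.Icc 1 m,
        ∃! i₀ : ℕ, i₀ ∈ Nbr' E j ∧
          (∃ a : ℕ, (a, (i₀, j), 1) ∈ C) ∧ (∃ a' : ℕ, (a', (i₀, j), 2) ∈ C)) := by
  intro C hC
  refine ⟨fun i hi => hC.existsUnique_double_source ?_, fun j hj => ?_⟩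
  · exact Finset.card_pos.mp (by linarith [hdegS i hi])
  · have hne : (Nbr' E j).Nonempty := Finset.card_pos.mp (by linarith [hdegT j hj])
    have := hC.preimage_reverse.existsUnique_double_source (i := j)
      (by rwa [Nbr_image_swap])
    simpa only [Nbr_image_swap, Set.mem_preimage, Route.reverse] using this

/-- For each vertex of `H`, a maximal clique uses both parallel source
(resp. sink) edges on exactly one incident edge of `H`. -/
theorem maxclique_unique_double_edge (n m : ℕ) (hn : 1 ≤ n) (hm : 1 ≤ m) (E : Finset (ℕ × ℕ))
    (hE : ∀ p ∈ E, 1 ≤ p.1 ∧ p.1 ≤ n ∧ 1 ≤ p.2 ∧ p.2 ≤ m)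
    (hdegS : ∀ i ∈ Finset.Icc 1 n, 2 ≤ (Nbr E i).card)
    (hdegT : ∀ j ∈ Finset.Icc 1 m, 2 ≤ (Nbr' E j).card) :
    ∀ C : Set Route, IsMaxClique E C →
      (∀ i ∈ Finset.Icc 1 n,
        ∃! j₀ : ℕ, j₀ ∈ Nbr E i ∧
          (∃ c : ℕ, (1, (i, j₀), c) ∈ C) ∧ (∃ c' : ℕ, (2, (i, j₀), c') ∈ C)) ∧
      (∀ j ∈ Finset.Icc 1 m,
        ∃! i₀ : ℕ, i₀ ∈ Nbr' E j ∧
          (∃ a : ℕ, (a, (i₀, j), 1) ∈ C) ∧ (∃ a' : ℕ, (a', (i₀, j), 2) ∈ C)) :=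
  maxclique_unique_double_edge_general n m E hdegS hdegT
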